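/- arXiv:1709.00695 — 5 statements merged into one kernel-verified Lean document; each statement's English description precedes it below -/
import Mathlib

section
/- Let A = [[A₁₁, A₁₂],[0, A₂₂]] be a real block upper-triangular matrix with square diagonal blocks. If there exist symmetric positive definite matrices P₁, P₂ with A₁₁ᵀP₁ + P₁A₁₁ ≺ 0 and A₂₂ᵀP₂ + P₂A₂₂ ≺ 0, then there exists ε > 0 such that P = diag(P₁, ε·P₂) satisfies AᵀP + PA ≺ 0. -/
/-!
Write `Q₁`, `Q₂` for the two negated Lyapunov matrices. Since `P₁` is symmetric, the negated
Lyapunov matrix of `A` for `diag(P₁, ε P₂)` is `[[Q₁, B], [Bᵀ, ε Q₂]]` with `B = -P₁ A₁₂`, and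
by the Schur complement it is positive definite iff `ε Q₂ - Bᵀ Q₁⁻¹ B` is. As `Q₂` is positive
definite, `ε Q₂` dominates the fixed symmetric matrix `Bᵀ Q₁⁻¹ B` once `ε` is large.
-/

open Matrix
open scoped ComplexOrder MatrixOrder

namespace Matrix

variable {m n 𝕜 : Type*} [Fintype m] [Fintype n] [DecidableEq m] [DecidableEq n] [RCLike 𝕜]

theorem posDef_fromBlocks₁₁_iff {A : Matrix m m 𝕜} (hA : A.PosDef) (B : Matrix m n 𝕜)
    (D : Matrix n n 𝕜) :
    (fromBlocks A B Bᴴ D).PosDef ↔ (D - Bᴴ * A⁻¹ * B).PosDef := by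
  have := hA.isUnit.invertible
  have hdet : (fromBlocks A B Bᴴ D).det = A.det * (D - Bᴴ * A⁻¹ * B).det := by
    rw [det_fromBlocks₁₁, invOf_eq_nonsing_inv]
  constructor
  · intro h
    rw [((hA.fromBlocks₁₁ B D).mp h.posSemidef).posDef_iff_det_ne_zero]
    exact right_ne_zero_of_mul (hdet ▸ h.det_pos.ne')
  · intro h
    rw [((hA.fromBlocks₁₁ B D).mpr h.posSemidef).posDef_iff_det_ne_zero, hdet]
    exact mul_ne_zero hA.det_pos.ne' h.det_pos.ne'

theorem PosDef.exists_smul_sub_posDef {Q C : Matrix n n 𝕜} (hQ : Q.PosDef) (hC : C.IsHermitian) :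
    ∃ ε : ℝ, 0 < ε ∧ (ε • Q - C).PosDef := by
  cases isEmpty_or_nonempty n
  · exact ⟨1, one_pos, .of_dotProduct_mulVec_pos (by ext i; exact isEmptyElim i)
      fun x hx => (hx (Subsingleton.elim _ _)).elim⟩
  obtain ⟨r, hr, hrQ⟩ : ∃ r > 0, algebraMap ℝ _ r ≤ Q :=
    (CFC.exists_pos_algebraMap_le_iff hQ.1.isSelfAdjoint).2 fun x hx =>
      hQ.isStrictlyPositive.spectrum_pos hx
  obtain ⟨s, hs⟩ := C.finite_real_spectrum.bddAbove
  have hCs : C ≤ algebraMap ℝ _ s := le_algebraMap_of_spectrum_le hs hC.isSelfAdjoint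
  set ε := (|s| + 1) / r
  have hε : 0 < ε := by positivity
  have hεrs : 0 < ε * r - s := by
    rw [div_mul_cancel₀ _ hr.ne']
    linarith [le_abs_self s]
  have hsplit : ε • Q - C = algebraMap ℝ _ (ε * r - s) +
      (ε • (Q - algebraMap ℝ _ r) + (algebraMap ℝ _ s - C)) := by
    rw [map_sub, map_mul, ← Algebra.smul_def]
    module
  refine ⟨ε, hε, hsplit ▸ PosDef.add_posSemidef ?_ ((hrQ.smul hε.le).add hCs)⟩
  rw [Algebra.algebraMap_eq_smul_one]
  exact PosDef.one.smul hεrs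

end Matrix

theorem stmt_5_general {n₁ n₂ : ℕ}
    (A₁₁ : Matrix (Fin n₁) (Fin n₁) ℝ) (A₁₂ : Matrix (Fin n₁) (Fin n₂) ℝ)
    (A₂₂ : Matrix (Fin n₂) (Fin n₂) ℝ)
    (P₁ : Matrix (Fin n₁) (Fin n₁) ℝ) (P₂ : Matrix (Fin n₂) (Fin n₂) ℝ)
    (hP₁ : P₁.PosDef)
    (h₁ : (-(A₁₁ᵀ * P₁ + P₁ * A₁₁)).PosDef)
    (h₂ : (-(A₂₂ᵀ * P₂ + P₂ * A₂₂)).PosDef) :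
    ∃ ε : ℝ, 0 < ε ∧
      (-((Matrix.fromBlocks A₁₁ A₁₂ 0 A₂₂)ᵀ * Matrix.fromBlocks P₁ 0 0 (ε • P₂) +
         Matrix.fromBlocks P₁ 0 0 (ε • P₂) * Matrix.fromBlocks A₁₁ A₁₂ 0 A₂₂)).PosDef := by
  set B := -(P₁ * A₁₂)
  have hP₁_symm : P₁ᵀ = P₁ := hP₁.1
  have hB_conj : Bᴴ = -(A₁₂ᵀ * P₁) := by
    rw [conjTranspose_eq_transpose_of_trivial, transpose_neg, transpose_mul, hP₁_symm]
  obtain ⟨ε, hε, hschur⟩ :=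
    h₂.exists_smul_sub_posDef (isHermitian_conjTranspose_mul_mul B h₁.1.inv)
  refine ⟨ε, hε, ?_⟩
  have hblocks : -((fromBlocks A₁₁ A₁₂ 0 A₂₂)ᵀ * fromBlocks P₁ 0 0 (ε • P₂) +
      fromBlocks P₁ 0 0 (ε • P₂) * fromBlocks A₁₁ A₁₂ 0 A₂₂) =
      fromBlocks (-(A₁₁ᵀ * P₁ + P₁ * A₁₁)) B Bᴴ (ε • -(A₂₂ᵀ * P₂ + P₂ * A₂₂)) := by
    rw [hB_conj]
    simp [B, fromBlocks_transpose, fromBlocks_multiply, fromBlocks_add, fromBlocks_neg,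
      Matrix.mul_smul]
  rw [hblocks]
  exact (posDef_fromBlocks₁₁_iff h₁ B _).mpr hschur

theorem stmt_5 {n₁ n₂ : ℕ}
    (A₁₁ : Matrix (Fin n₁) (Fin n₁) ℝ) (A₁₂ : Matrix (Fin n₁) (Fin n₂) ℝ)
    (A₂₂ : Matrix (Fin n₂) (Fin n₂) ℝ)
    (P₁ : Matrix (Fin n₁) (Fin n₁) ℝ) (P₂ : Matrix (Fin n₂) (Fin n₂) ℝ)
    (hP₁ : P₁.PosDef) (hP₂ : P₂.PosDef)
    (h₁ : (-(A₁₁ᵀ * P₁ + P₁ * A₁₁)).PosDef)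
    (h₂ : (-(A₂₂ᵀ * P₂ + P₂ * A₂₂)).PosDef) :
    ∃ ε : ℝ, 0 < ε ∧
      (-((Matrix.fromBlocks A₁₁ A₁₂ 0 A₂₂)ᵀ * Matrix.fromBlocks P₁ 0 0 (ε • P₂) +
         Matrix.fromBlocks P₁ 0 0 (ε • P₂) * Matrix.fromBlocks A₁₁ A₁₂ 0 A₂₂)).PosDef :=
  stmt_5_general A₁₁ A₁₂ A₂₂ P₁ P₂ hP₁ h₁ h₂
end

section
/- For any real numbers a₁ < −1/2 and a₂, there exists k₂ ∈ ℝ such that the matrix [[1, 2],[a₁, a₂ − k₂]] is Hurwitz; conversely, if a₁ ≥ −1/2, no such k₂ exists. -/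
open Matrix

/-- A real matrix is Hurwitz if all of its (complex) eigenvalues have
negative real part. -/
def IsHurwitz {n : Type*} [Fintype n] [DecidableEq n] (A : Matrix n n ℝ) : Prop :=
  ∀ μ ∈ spectrum ℂ (A.map Complex.ofReal), μ.re < 0

lemma mem_spec (a₁ b : ℝ) (μ : ℂ) :
    μ ∈ spectrum ℂ ((!![1, 2; a₁, b] : Matrix (Fin 2) (Fin 2) ℝ).map Complex.ofReal) ↔
    μ^2 - (1+(b:ℂ))*μ + ((b:ℂ) - 2*a₁) = 0 := by
  rw [spectrum.mem_iff, Matrix.isUnit_iff_isUnit_det, isUnit_iff_ne_zero, not_ne_iff]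
  have h : (algebraMap ℂ (Matrix (Fin 2) (Fin 2) ℂ)) μ - (!![1, 2; a₁, b]).map Complex.ofReal
      = !![μ - 1, -2; -(a₁:ℂ), μ - b] := by
    ext i j
    fin_cases i <;> fin_cases j <;>
      simp [Matrix.algebraMap_matrix_apply, Matrix.map_apply]
  rw [h, Matrix.det_fin_two_of]
  constructor <;> intro hh <;> linear_combination hh

theorem stmt_10 (a₁ a₂ : ℝ) :
    (a₁ < -(1/2) → ∃ k₂ : ℝ, IsHurwitz (!![1, 2; a₁, a₂ - k₂] : Matrix (Fin 2) (Fin 2) ℝ)) ∧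
    (a₁ ≥ -(1/2) → ∀ k₂ : ℝ, ¬ IsHurwitz (!![1, 2; a₁, a₂ - k₂] : Matrix (Fin 2) (Fin 2) ℝ)) := by
  constructor
  · intro ha
    refine ⟨a₂ - (a₁ - 1/2), ?_⟩
    set b : ℝ := a₂ - (a₂ - (a₁ - 1/2)) with hb
    have hbval : b = a₁ - 1/2 := by rw [hb]; ring
    have ht : 1 + b < 0 := by rw [hbval]; linarith
    have hd : (0:ℝ) < b - 2*a₁ := by rw [hbval]; linarith
    intro μ hμ
    rw [mem_spec] at hμ
    set x := μ.re
    set y := μ.im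
    have hre : x^2 - y^2 - (1+b)*x + (b - 2*a₁) = 0 := by
      have := congrArg Complex.re hμ
      simpa [Complex.add_re, Complex.sub_re, Complex.mul_re, Complex.sq_norm, pow_two] using this
    have him : 2*x*y - (1+b)*y = 0 := by
      have := congrArg Complex.im hμ
      simp [Complex.add_im, Complex.sub_im, Complex.mul_im, pow_two] at this
      linarith [this]
    rcases mul_eq_zero.mp (show y * (2*x - (1+b)) = 0 by linarith) with hy | hx
    · -- y = 0
      by_contra hxe
      push_neg at hxe
      have h1 : x^2 - (1+b)*x + (b - 2*a₁) > 0 := by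
        have : -(1+b)*x ≥ 0 := mul_nonneg (by linarith) hxe
        nlinarith [sq_nonneg x]
      rw [hy] at hre
      nlinarith
    · -- 2x = 1+b
      show x < 0
      linarith
  · intro ha k₂ hH
    set b : ℝ := a₂ - k₂
    set t : ℝ := 1 + b with htdef
    set d : ℝ := b - 2*a₁ with hddef
    have key : t ≥ 0 ∨ d ≤ 0 := by
      by_cases hb1 : b ≤ -1
      · right; simp only [hddef]; linarith
      · left; push_neg at hb1; linarith
    by_cases hdisc : t^2 - 4*d ≥ 0
    · -- real root
      set s := Real.sqrt (t^2 - 4*d) with hs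
      have hs2 : s^2 = t^2 - 4*d := Real.sq_sqrt hdisc
      set x : ℝ := (t + s)/2
      have hroot : ((x:ℂ))^2 - (1+(b:ℂ))*(x:ℂ) + ((b:ℂ) - 2*a₁) = 0 := by
        have hx : x^2 - t*x + d = 0 := by
          show ((t+s)/2)^2 - t*((t+s)/2) + d = 0
          linear_combination hs2/4
        have ht' : (1+(b:ℂ)) = ((t:ℝ):ℂ) := by push_cast [htdef]; ring
        have hd' : ((b:ℂ) - 2*a₁) = ((d:ℝ):ℂ) := by push_cast [hddef]; ring
        rw [ht', hd']
        exact_mod_cast congrArg (Complex.ofReal) hx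
      have hx0 : 0 ≤ x := by
        have hsn : 0 ≤ s := Real.sqrt_nonneg _
        rcases key with h | h
        · positivity
        · have : s ≥ -t := by
            have : t^2 ≤ t^2 - 4*d := by linarith
            have h2 : |t| ≤ s := by
              rw [hs, ← Real.sqrt_sq_eq_abs]
              exact Real.sqrt_le_sqrt this
            linarith [neg_abs_le t]
          simp only [x]
          linarith
      have := hH (x:ℂ) ((mem_spec a₁ b _).mpr hroot)
      simp at this
      linarith
    · push_neg at hdisc
      set s := Real.sqrt (4*d - t^2) with hs
      have hs2 : s^2 = 4*d - t^2 := Real.sq_sqrt (by linarith)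
      have hd0 : 0 < d := by nlinarith [sq_nonneg t]
      have ht0 : 0 ≤ t := by
        rcases key with h | h
        · exact h
        · linarith
      set μ : ℂ := ⟨t/2, s/2⟩ with hμ
      have hroot : μ^2 - (1+(b:ℂ))*μ + ((b:ℂ) - 2*a₁) = 0 := by
        have ht' : (1+(b:ℂ)) = ((t:ℝ):ℂ) := by push_cast [htdef]; ring
        have hd' : ((b:ℂ) - 2*a₁) = ((d:ℝ):ℂ) := by push_cast [hddef]; ring
        rw [ht', hd']
        apply Complex.ext <;>
          simp [hμ, pow_two, Complex.mul_re, Complex.mul_im] <;> nlinarith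
      have := hH μ ((mem_spec a₁ b _).mpr hroot)
      simp [hμ] at this
      linarith
end

section
/- Let a 3×3 real symmetric matrix X with sparsity pattern X₁₃ = X₃₁ = 0 be positive semidefinite and suppose X₂₂ > 0. Then there exist 2×2 positive semidefinite matrices S₁, S₂ such that X = E₁ᵀS₁E₁ + E₂ᵀS₂E₂, where E₁, E₂ select the index sets {1,2} and {2,3} respectively. -/
/-!
Eliminating the first variable splits `X` into the rank-one matrix `X₁₁⁻¹ r rᵀ`, with `r` the first
row of `X`, and the Schur complement `X - X₁₁⁻¹ r rᵀ`. Both are positive semidefinite: the quadratic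
form of the Schur complement at `x` is the form of `X` at `x - (r·x / X₁₁) e₁`. Since `X₁₃ = 0`, the
rank-one part is supported on the clique `{1,2}`, while the Schur complement has vanishing first
row and column, so is supported on `{2,3}`.
-/

open Matrix

namespace Matrix

variable {n : Type*} [Fintype n]

/-- When `X p p = 0` this is `0` (as `0⁻¹ = 0`); for positive semidefinite `X` the `p`-th row
then vanishes as well, so `X - pivotPart X p` is still the Schur complement. -/
noncomputable def pivotPart (X : Matrix n n ℝ) (p : n) : Matrix n n ℝ :=
  (X p p)⁻¹ • vecMulVec (X p) (X p)

omit [Fintype n] in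
lemma pivotPart_apply (X : Matrix n n ℝ) (p i j : n) :
    pivotPart X p i j = (X p p)⁻¹ * (X p i * X p j) := by
  simp [pivotPart, vecMulVec_apply]

lemma posSemidef_pivotPart {X : Matrix n n ℝ} {p : n} (hp : 0 ≤ X p p) :
    (pivotPart X p).PosSemidef :=
  (posSemidef_vecMulVec_self_star (X p)).smul (inv_nonneg.2 hp)

lemma dotProduct_mulVec_pivotPart (X : Matrix n n ℝ) (p : n) (x : n → ℝ) :
    x ⬝ᵥ pivotPart X p *ᵥ x = (X p p)⁻¹ * (X *ᵥ x) p ^ 2 := by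
  have hrow : (X *ᵥ x) p = X p ⬝ᵥ x := rfl
  simp only [pivotPart, smul_mulVec, vecMulVec_mulVec, hrow, dotProduct_comm x]
  simp [sq, mul_comm]

variable [DecidableEq n]

lemma IsHermitian.dotProduct_mulVec_sub_single {X : Matrix n n ℝ} (hX : X.IsHermitian)
    (x : n → ℝ) (p : n) (t : ℝ) :
    (x - Pi.single p t) ⬝ᵥ X *ᵥ (x - Pi.single p t) =
      x ⬝ᵥ X *ᵥ x - 2 * t * (X *ᵥ x) p + t ^ 2 * X p p := by
  have hT : Xᵀ = X := by simpa [conjTranspose_eq_transpose_of_trivial] using hX.eq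
  have hcol : x ⬝ᵥ X.col p = (X *ᵥ x) p := by
    change x ⬝ᵥ Xᵀ p = X p ⬝ᵥ x
    rw [hT, dotProduct_comm]
  simp only [mulVec_sub, mulVec_single, op_smul_eq_smul, dotProduct_sub, sub_dotProduct,
    single_dotProduct, dotProduct_smul, hcol, col_apply, smul_eq_mul]
  ring

lemma PosSemidef.apply_eq_zero_of_diag_eq_zero {X : Matrix n n ℝ} (hX : X.PosSemidef) {p : n}
    (hp : X p p = 0) (j : n) : X p j = 0 := by
  -- the form at `e_j - t e_p` is `X j j - 2 t X p j ≥ 0` for every `t`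
  by_contra hpj
  have h := hX.dotProduct_mulVec_nonneg (Pi.single j 1 - Pi.single p ((X j j + 1) / X p j))
  rw [star_trivial, hX.isHermitian.dotProduct_mulVec_sub_single] at h
  simp only [mulVec_single, MulOpposite.op_one, one_smul, single_dotProduct, col_apply, one_mul,
    Pi.smul_apply, hp, mul_zero, add_zero, sub_nonneg] at h
  field_simp at h
  linarith [hX.diag_nonneg (i := j)]

lemma PosSemidef.sub_pivotPart {X : Matrix n n ℝ} (hX : X.PosSemidef) (p : n) :
    (X - pivotPart X p).PosSemidef := by
  rcases (hX.diag_nonneg (i := p)).eq_or_lt with hp | hp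
  · simpa [pivotPart, ← hp] using hX
  refine .of_dotProduct_mulVec_nonneg
    (hX.isHermitian.sub (posSemidef_pivotPart hp.le).isHermitian) fun x => ?_
  have h := hX.dotProduct_mulVec_nonneg (x - Pi.single p ((X *ᵥ x) p / X p p))
  rw [star_trivial, hX.isHermitian.dotProduct_mulVec_sub_single] at h
  rw [star_trivial, sub_mulVec, dotProduct_sub, dotProduct_mulVec_pivotPart]
  convert h using 1
  field_simp
  ring

lemma PosSemidef.sub_pivotPart_apply_pivot_left {X : Matrix n n ℝ} (hX : X.PosSemidef) (p j : n) :
    (X - pivotPart X p) p j = 0 := by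
  rcases eq_or_ne (X p p) 0 with hp | hp
  · simp [pivotPart_apply, hp, hX.apply_eq_zero_of_diag_eq_zero hp j]
  · simp [pivotPart_apply, hp]

lemma PosSemidef.sub_pivotPart_apply_pivot_right {X : Matrix n n ℝ} (hX : X.PosSemidef)
    (p i : n) : (X - pivotPart X p) i p = 0 := by
  rw [← (hX.sub_pivotPart p).isHermitian.apply, hX.sub_pivotPart_apply_pivot_left, star_zero]

lemma transpose_mul_submatrix_zero_one_mul {A : Matrix (Fin 3) (Fin 3) ℝ}
    (hrow : ∀ j, A 2 j = 0) (hcol : ∀ i, A i 2 = 0) :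
    (!![1, 0, 0; 0, 1, 0] : Matrix (Fin 2) (Fin 3) ℝ)ᵀ * A.submatrix ![0, 1] ![0, 1] *
      (!![1, 0, 0; 0, 1, 0] : Matrix (Fin 2) (Fin 3) ℝ) = A := by
  ext i j
  simp only [mul_apply, transpose_apply, submatrix_apply, Fin.sum_univ_two]
  fin_cases i <;> fin_cases j <;> simp [hrow, hcol]

lemma transpose_mul_submatrix_one_two_mul {A : Matrix (Fin 3) (Fin 3) ℝ}
    (hrow : ∀ j, A 0 j = 0) (hcol : ∀ i, A i 0 = 0) :
    (!![0, 1, 0; 0, 0, 1] : Matrix (Fin 2) (Fin 3) ℝ)ᵀ * A.submatrix ![1, 2] ![1, 2] *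
      (!![0, 1, 0; 0, 0, 1] : Matrix (Fin 2) (Fin 3) ℝ) = A := by
  ext i j
  simp only [mul_apply, transpose_apply, submatrix_apply, Fin.sum_univ_two]
  fin_cases i <;> fin_cases j <;> simp [hrow, hcol]

end Matrix

theorem stmt_16_general (X : Matrix (Fin 3) (Fin 3) ℝ) (hX : X.PosSemidef)
    (hX13 : X 0 2 = 0) :
    ∃ S₁ S₂ : Matrix (Fin 2) (Fin 2) ℝ, S₁.PosSemidef ∧ S₂.PosSemidef ∧
      X = (!![1, 0, 0; 0, 1, 0] : Matrix (Fin 2) (Fin 3) ℝ)ᵀ * S₁ *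
            (!![1, 0, 0; 0, 1, 0] : Matrix (Fin 2) (Fin 3) ℝ) +
          (!![0, 1, 0; 0, 0, 1] : Matrix (Fin 2) (Fin 3) ℝ)ᵀ * S₂ *
            (!![0, 1, 0; 0, 0, 1] : Matrix (Fin 2) (Fin 3) ℝ) := by
  set R := pivotPart X 0
  refine ⟨R.submatrix ![0, 1] ![0, 1], (X - R).submatrix ![1, 2] ![1, 2],
    (posSemidef_pivotPart hX.diag_nonneg).submatrix _, (hX.sub_pivotPart 0).submatrix _, ?_⟩
  rw [transpose_mul_submatrix_zero_one_mul (by simp [R, pivotPart_apply, hX13])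
      (by simp [R, pivotPart_apply, hX13]),
    transpose_mul_submatrix_one_two_mul (hX.sub_pivotPart_apply_pivot_left 0)
      (hX.sub_pivotPart_apply_pivot_right 0),
    add_sub_cancel]

theorem stmt_16 (X : Matrix (Fin 3) (Fin 3) ℝ) (hX : X.PosSemidef)
    (hX13 : X 0 2 = 0) (hX31 : X 2 0 = 0) (hX22 : 0 < X 1 1) :
    ∃ S₁ S₂ : Matrix (Fin 2) (Fin 2) ℝ, S₁.PosSemidef ∧ S₂.PosSemidef ∧
      X = (!![1, 0, 0; 0, 1, 0] : Matrix (Fin 2) (Fin 3) ℝ)ᵀ * S₁ *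
            (!![1, 0, 0; 0, 1, 0] : Matrix (Fin 2) (Fin 3) ℝ) +
          (!![0, 1, 0; 0, 0, 1] : Matrix (Fin 2) (Fin 3) ℝ)ᵀ * S₂ *
            (!![0, 1, 0; 0, 0, 1] : Matrix (Fin 2) (Fin 3) ℝ) :=
  stmt_16_general X hX hX13
end

section
/- Suppose for each i = 1,…,N there exist symmetric positive definite matrices Pᵢ and matrices Wᵢⱼ ≻ 0 (for j in the in-neighborhood Nᵢ) and gains Kᵢᵢ such that (Aᵢᵢ − BᵢKᵢᵢ)ᵀPᵢ + Pᵢ(Aᵢᵢ − BᵢKᵢᵢ) + Pᵢ(Σ_{j∈Nᵢ} Aᵢⱼ Wᵢⱼ⁻¹ Aᵢⱼᵀ)Pᵢ + Σ_{j∈N̂ᵢ} Wⱼᵢ ≺ 0, where N̂ᵢ is the out-neighborhood. Then P = diag(P₁,…,P_N) satisfies (A − BK)ᵀP + P(A − BK) ≺ 0 for the block-structured A (with blocks Aᵢⱼ supported on the graph edges), B = diag(Bᵢ), K = diag(Kᵢᵢ); i.e., the closed-loop matrix admits a block-diagonal Lyapunov function. -/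
/-!
Write `x = (x₁, …, x_N)` blockwise and `Q = diag(P₁, …, P_N)`. The quadratic form of
`(A - BK)ᵀQ + Q(A - BK)` is `Σᵢ 2 (Pᵢxᵢ)ᵀ(Σⱼ Aᵢⱼxⱼ - BᵢKᵢxᵢ)`. Each coupling term
`2 (Pᵢxᵢ)ᵀAᵢⱼxⱼ` along an edge `j → i` is at most `xᵢᵀPᵢAᵢⱼWᵢⱼ⁻¹AᵢⱼᵀPᵢxᵢ + xⱼᵀWᵢⱼxⱼ`
(complete the square in the `Wᵢⱼ`-norm). Charging the first summand to subsystem `i` and the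
second to subsystem `j`, where it is collected over the out-neighbours of `j`, bounds the
form by `Σᵢ xᵢᵀMᵢxᵢ` with `Mᵢ` the local matrix of the hypothesis, which is negative for
`x ≠ 0`.
-/

open Matrix

section QuadraticForms

variable {p q : Type*} [Fintype p] [Fintype q]

lemma Matrix.PosDef.two_mul_dotProduct_le [DecidableEq q] {W : Matrix q q ℝ} (hW : W.PosDef)
    (w v : q → ℝ) : 2 * (w ⬝ᵥ v) ≤ w ⬝ᵥ W⁻¹ *ᵥ w + v ⬝ᵥ W *ᵥ v := by
  have hWW : W *ᵥ (W⁻¹ *ᵥ w) = w := by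
    rw [mulVec_mulVec, mul_nonsing_inv _ ((isUnit_iff_isUnit_det _).1 hW.isUnit), one_mulVec]
  have hcross : (W⁻¹ *ᵥ w) ⬝ᵥ (W *ᵥ v) = w ⬝ᵥ v := by
    rw [dotProduct_mulVec, ← mulVec_transpose, (isHermitian_iff_isSymm.1 hW.isHermitian).eq, hWW]
  -- expand `0 ≤ (v - W⁻¹w)ᵀ W (v - W⁻¹w)`
  have key := hW.posSemidef.dotProduct_mulVec_nonneg (v - W⁻¹ *ᵥ w)
  rw [star_trivial, mulVec_sub, dotProduct_sub, sub_dotProduct, sub_dotProduct, hWW, hcross,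
    dotProduct_comm v w, dotProduct_comm (W⁻¹ *ᵥ w) w] at key
  linarith

lemma Matrix.PosDef.two_mul_dotProduct_mulVec_le [DecidableEq q] {W : Matrix q q ℝ}
    (hW : W.PosDef) (A : Matrix p q ℝ) (u : p → ℝ) (v : q → ℝ) :
    2 * (u ⬝ᵥ A *ᵥ v) ≤ u ⬝ᵥ (A * W⁻¹ * Aᵀ) *ᵥ u + v ⬝ᵥ W *ᵥ v := by
  have h := hW.two_mul_dotProduct_le (Aᵀ *ᵥ u) v
  rw [mulVec_transpose] at h
  rwa [dotProduct_mulVec u A, ← mulVec_mulVec, ← mulVec_mulVec, dotProduct_mulVec u A,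
    mulVec_transpose]

lemma dotProduct_transpose_mul_add_mul_mulVec {R : Type*} [CommRing R] {P : Matrix p p R}
    (hP : Pᵀ = P) (M : Matrix p p R) (x : p → R) :
    x ⬝ᵥ (Mᵀ * P + P * M) *ᵥ x = 2 * ((P *ᵥ x) ⬝ᵥ (M *ᵥ x)) := by
  rw [add_mulVec, dotProduct_add, ← mulVec_mulVec, ← mulVec_mulVec, dotProduct_mulVec x Mᵀ,
    vecMul_transpose, dotProduct_mulVec x P, ← mulVec_transpose, hP, dotProduct_comm (M *ᵥ x)]
  ring

end QuadraticForms

section BlockVectors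

variable {R ι : Type*} {n : ι → Type*}

def blockComponent (x : (Σ i, n i) → R) (i : ι) : n i → R := fun k => x ⟨i, k⟩

lemma blockComponent_sub [Sub R] (x y : (Σ i, n i) → R) (i : ι) :
    blockComponent (x - y) i = blockComponent x i - blockComponent y i :=
  rfl

variable [Fintype ι] [∀ i, Fintype (n i)]

lemma dotProduct_eq_sum_blockComponent [NonUnitalNonAssocSemiring R] (y z : (Σ i, n i) → R) :
    y ⬝ᵥ z = ∑ i, blockComponent y i ⬝ᵥ blockComponent z i := by
  simp only [blockComponent, dotProduct, Fintype.sum_sigma]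

lemma blockComponent_of_mulVec [NonUnitalNonAssocSemiring R] (A : ∀ i j, Matrix (n i) (n j) R)
    (x : (Σ i, n i) → R) (i : ι) :
    blockComponent (of (fun a b : Σ i, n i => A a.1 b.1 a.2 b.2) *ᵥ x) i =
      ∑ j, A i j *ᵥ blockComponent x j := by
  ext k
  simp only [blockComponent, mulVec, dotProduct, Fintype.sum_sigma, Finset.sum_apply, of_apply]

lemma blockComponent_blockDiagonal'_mulVec [DecidableEq ι] [NonUnitalNonAssocSemiring R]
    (M : ∀ i, Matrix (n i) (n i) R) (x : (Σ i, n i) → R) (i : ι) :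
    blockComponent (blockDiagonal' M *ᵥ x) i = M i *ᵥ blockComponent x i := by
  ext k
  simp only [blockComponent, mulVec, dotProduct, Fintype.sum_sigma]
  rw [Finset.sum_eq_single i (fun j _ hj => ?_) (by simp)]
  · simp
  · simp [blockDiagonal'_apply_ne _ _ _ (Ne.symm hj)]

lemma sum_dotProduct_mulVec_blockComponent_pos (L : ∀ i, Matrix (n i) (n i) ℝ)
    (hL : ∀ i, (L i).PosDef) {x : (Σ i, n i) → ℝ} (hx : x ≠ 0) :
    0 < ∑ i, blockComponent x i ⬝ᵥ L i *ᵥ blockComponent x i := by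
  obtain ⟨⟨i, k⟩, hik⟩ := Function.ne_iff.1 hx
  have hxi : blockComponent x i ≠ 0 := fun h => hik (congrFun h k)
  refine Finset.sum_pos' (fun j _ => ?_) ⟨i, Finset.mem_univ i, ?_⟩
  · simpa using (hL j).posSemidef.dotProduct_mulVec_nonneg (blockComponent x j)
  · simpa using (hL i).dotProduct_mulVec_pos hxi

end BlockVectors

section Coupling

variable {ι p : Type*} [DecidableEq ι] [Fintype p] {n : ι → Type*} [∀ i, Fintype (n i)]
  [∀ i, DecidableEq (n i)]

lemma sum_two_mul_dotProduct_mulVec_le {s t : Finset ι} {A : ∀ j, Matrix p (n j) ℝ}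
    {W : ∀ j, Matrix (n j) (n j) ℝ} (hA : ∀ j ∈ t, j ∉ s → A j = 0)
    (hW : ∀ j ∈ s, (W j).PosDef) (u : p → ℝ) (x : ∀ j, n j → ℝ) :
    ∑ j ∈ t, 2 * (u ⬝ᵥ A j *ᵥ x j) ≤
      u ⬝ᵥ (∑ j ∈ s, A j * (W j)⁻¹ * (A j)ᵀ) *ᵥ u + ∑ j ∈ s, x j ⬝ᵥ W j *ᵥ x j := by
  have hbound_nonneg : ∀ j ∈ s, 0 ≤ u ⬝ᵥ (A j * (W j)⁻¹ * (A j)ᵀ) *ᵥ u + x j ⬝ᵥ W j *ᵥ x j := by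
    intro j hj
    have h₁ :=
      ((hW j hj).inv.posSemidef.mul_mul_conjTranspose_same (A j)).dotProduct_mulVec_nonneg u
    have h₂ := (hW j hj).posSemidef.dotProduct_mulVec_nonneg (x j)
    simp only [star_trivial, conjTranspose_eq_transpose_of_trivial] at h₁ h₂
    positivity
  calc ∑ j ∈ t, 2 * (u ⬝ᵥ A j *ᵥ x j)
      = ∑ j ∈ t with j ∈ s, 2 * (u ⬝ᵥ A j *ᵥ x j) := by
        refine (Finset.sum_filter_of_ne fun j hj hne => ?_).symm
        by_contra hjs
        simp [hA j hj hjs] at hne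
    _ ≤ ∑ j ∈ t with j ∈ s, (u ⬝ᵥ (A j * (W j)⁻¹ * (A j)ᵀ) *ᵥ u + x j ⬝ᵥ W j *ᵥ x j) :=
        Finset.sum_le_sum fun j hj =>
          (hW j (Finset.mem_filter.1 hj).2).two_mul_dotProduct_mulVec_le (A j) u (x j)
    _ ≤ ∑ j ∈ s, (u ⬝ᵥ (A j * (W j)⁻¹ * (A j)ᵀ) *ᵥ u + x j ⬝ᵥ W j *ᵥ x j) :=
        Finset.sum_le_sum_of_subset_of_nonneg (fun j hj => (Finset.mem_filter.1 hj).2)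
          fun j hj _ => hbound_nonneg j hj
    _ = u ⬝ᵥ (∑ j ∈ s, A j * (W j)⁻¹ * (A j)ᵀ) *ᵥ u + ∑ j ∈ s, x j ⬝ᵥ W j *ᵥ x j := by
        rw [sum_mulVec, dotProduct_sum, Finset.sum_add_distrib]

end Coupling

section Graph

variable {ι : Type*} [Fintype ι] [DecidableEq ι]

def inNeighbors (E : Finset (ι × ι)) (i : ι) : Finset ι := {j | (j, i) ∈ E}

def outNeighbors (E : Finset (ι × ι)) (i : ι) : Finset ι := {j | (i, j) ∈ E}

lemma sum_sum_inNeighbors_eq_sum_sum_outNeighbors {M : Type*} [AddCommMonoid M]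
    (E : Finset (ι × ι)) (f : ι → ι → M) :
    ∑ i, ∑ j ∈ inNeighbors E i, f i j = ∑ i, ∑ j ∈ outNeighbors E i, f j i := by
  simp only [inNeighbors, outNeighbors, Finset.sum_filter]
  exact Finset.sum_comm

end Graph

section LocalLyapunov

variable {ι : Type*} [Fintype ι] [DecidableEq ι] {n : ι → Type*} [∀ i, Fintype (n i)]
  [∀ i, DecidableEq (n i)]

noncomputable def localLyapunovMatrix (E : Finset (ι × ι)) (A : ∀ i j, Matrix (n i) (n j) ℝ)
    (D P : ∀ i, Matrix (n i) (n i) ℝ) (W : ι → ∀ j, Matrix (n j) (n j) ℝ) (i : ι) :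
    Matrix (n i) (n i) ℝ :=
  (A i i - D i)ᵀ * P i + P i * (A i i - D i) +
    P i * (∑ j ∈ inNeighbors E i, A i j * (W i j)⁻¹ * (A i j)ᵀ) * P i +
    ∑ j ∈ outNeighbors E i, W j i

theorem sum_two_mul_dotProduct_le_sum_localLyapunovMatrix {E : Finset (ι × ι)}
    {A : ∀ i j, Matrix (n i) (n j) ℝ} {D P : ∀ i, Matrix (n i) (n i) ℝ}
    {W : ι → ∀ j, Matrix (n j) (n j) ℝ} (hA : ∀ i j, i ≠ j → (j, i) ∉ E → A i j = 0)
    (hP : ∀ i, (P i)ᵀ = P i) (hW : ∀ i j, (j, i) ∈ E → (W i j).PosDef) (x : ∀ i, n i → ℝ) :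
    ∑ i, 2 * ((P i *ᵥ x i) ⬝ᵥ (∑ j, A i j *ᵥ x j - D i *ᵥ x i)) ≤
      ∑ i, x i ⬝ᵥ localLyapunovMatrix E A D P W i *ᵥ x i := by
  have hrow : ∀ i, 2 * ((P i *ᵥ x i) ⬝ᵥ (∑ j, A i j *ᵥ x j - D i *ᵥ x i)) =
      x i ⬝ᵥ ((A i i - D i)ᵀ * P i + P i * (A i i - D i)) *ᵥ x i +
        ∑ j ∈ Finset.univ.erase i, 2 * ((P i *ᵥ x i) ⬝ᵥ A i j *ᵥ x j) := by
    intro i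
    rw [dotProduct_transpose_mul_add_mul_mulVec (hP i), ← Finset.add_sum_erase _ _
      (Finset.mem_univ i), dotProduct_sub, dotProduct_add, dotProduct_sum, sub_mulVec,
      dotProduct_sub, ← Finset.mul_sum]
    ring
  have hcross : ∀ i, ∑ j ∈ Finset.univ.erase i, 2 * ((P i *ᵥ x i) ⬝ᵥ A i j *ᵥ x j) ≤
      x i ⬝ᵥ (P i * (∑ j ∈ inNeighbors E i, A i j * (W i j)⁻¹ * (A i j)ᵀ) * P i) *ᵥ x i +
        ∑ j ∈ inNeighbors E i, x j ⬝ᵥ W i j *ᵥ x j := by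
    intro i
    rw [← mulVec_mulVec, ← mulVec_mulVec, dotProduct_mulVec, ← mulVec_transpose, hP i]
    refine sum_two_mul_dotProduct_mulVec_le (fun j hj hjE => ?_) (fun j hj => ?_) _ x
    · exact hA i j (Finset.ne_of_mem_erase hj).symm (by simpa [inNeighbors] using hjE)
    · exact hW i j (by simpa [inNeighbors] using hj)
  calc ∑ i, 2 * ((P i *ᵥ x i) ⬝ᵥ (∑ j, A i j *ᵥ x j - D i *ᵥ x i))
      ≤ ∑ i, (x i ⬝ᵥ ((A i i - D i)ᵀ * P i + P i * (A i i - D i)) *ᵥ x i +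
          x i ⬝ᵥ (P i * (∑ j ∈ inNeighbors E i, A i j * (W i j)⁻¹ * (A i j)ᵀ) * P i) *ᵥ x i +
          ∑ j ∈ inNeighbors E i, x j ⬝ᵥ W i j *ᵥ x j) := by
        refine Finset.sum_le_sum fun i _ => ?_
        rw [hrow, add_assoc]
        exact (add_le_add_iff_left _).2 (hcross i)
    _ = ∑ i, x i ⬝ᵥ localLyapunovMatrix E A D P W i *ᵥ x i := by
        rw [Finset.sum_add_distrib, sum_sum_inNeighbors_eq_sum_sum_outNeighbors,
          ← Finset.sum_add_distrib]
        simp only [localLyapunovMatrix, add_mulVec, dotProduct_add, sum_mulVec, dotProduct_sum]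

end LocalLyapunov

theorem stmt_17 {N : ℕ} (n m : Fin N → ℕ)
    (E : Finset (Fin N × Fin N))  -- (j, i) ∈ E means subsystem j influences subsystem i
    (A : ∀ i j : Fin N, Matrix (Fin (n i)) (Fin (n j)) ℝ)
    (hA : ∀ i j : Fin N, i ≠ j → (j, i) ∉ E → A i j = 0)
    (B : ∀ i : Fin N, Matrix (Fin (n i)) (Fin (m i)) ℝ)
    (K : ∀ i : Fin N, Matrix (Fin (m i)) (Fin (n i)) ℝ)
    (P : ∀ i : Fin N, Matrix (Fin (n i)) (Fin (n i)) ℝ)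
    (W : ∀ i j : Fin N, Matrix (Fin (n j)) (Fin (n j)) ℝ)
    (hP : ∀ i, (P i).PosDef)
    (hW : ∀ i j : Fin N, (j, i) ∈ E → (W i j).PosDef)
    (hlocal : ∀ i : Fin N,
      (-((A i i - B i * K i)ᵀ * P i + P i * (A i i - B i * K i) +
          P i * (∑ j ∈ Finset.univ.filter (fun j => (j, i) ∈ E),
                  A i j * (W i j)⁻¹ * (A i j)ᵀ) * P i +
          ∑ j ∈ Finset.univ.filter (fun j => (i, j) ∈ E), W j i)).PosDef)
    (Acl : Matrix (Σ i, Fin (n i)) (Σ i, Fin (n i)) ℝ)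
    (hAcl : Acl = (Matrix.of fun p q : Σ i, Fin (n i) => A p.1 q.1 p.2 q.2) -
        Matrix.blockDiagonal' (fun i => B i * K i)) :
    (-(Aclᵀ * Matrix.blockDiagonal' P + Matrix.blockDiagonal' P * Acl)).PosDef := by
  have hPs : ∀ i, (P i)ᵀ = P i := fun i => (isHermitian_iff_isSymm.1 (hP i).isHermitian).eq
  have hQs : (blockDiagonal' P)ᵀ = blockDiagonal' P := by
    rw [blockDiagonal'_transpose]
    exact congrArg _ (funext hPs)
  have hAcl_block : ∀ x i, blockComponent (Acl *ᵥ x) i =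
      ∑ j, A i j *ᵥ blockComponent x j - (B i * K i) *ᵥ blockComponent x i := fun x i => by
    rw [hAcl, sub_mulVec, blockComponent_sub, blockComponent_of_mulVec,
      blockComponent_blockDiagonal'_mulVec]
  refine posDef_iff_dotProduct_mulVec.2 ⟨?_, fun x hx => ?_⟩
  · rw [isHermitian_iff_isSymm]
    exact IsSymm.neg <| by
      rw [IsSymm, transpose_add, transpose_mul, transpose_mul, transpose_transpose, hQs, add_comm]
  · have hlyap := sum_two_mul_dotProduct_le_sum_localLyapunovMatrix (D := fun i => B i * K i)
      hA hPs hW (blockComponent x)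
    have hpos := sum_dotProduct_mulVec_blockComponent_pos _ hlocal hx
    simp only [neg_mulVec, dotProduct_neg, Finset.sum_neg_distrib] at hpos
    rw [star_trivial, neg_mulVec, dotProduct_neg, dotProduct_transpose_mul_add_mul_mulVec hQs,
      dotProduct_eq_sum_blockComponent, Finset.mul_sum]
    simp only [blockComponent_blockDiagonal'_mulVec, hAcl_block]
    exact neg_pos.2 (hlyap.trans_lt (neg_pos.1 hpos))
end

section
/- If there exist a symmetric positive definite matrix X and a matrix Z with (AX − BZ) + (AX − BZ)ᵀ ≺ 0, then the matrix A − BZX⁻¹ is Hurwitz, with Lyapunov certificate P = X⁻¹: (A − BZX⁻¹)ᵀP + P(A − BZX⁻¹) ≺ 0. -/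
/-!
Congruence by `X⁻¹` turns the LMI `(A X - B Z) + (A X - B Z)ᵀ ≺ 0` into the Lyapunov inequality
`Mᵀ X⁻¹ + X⁻¹ M ≺ 0` for `M = A - B Z X⁻¹`, since `M X = A X - B Z`. For an eigenpair `M v = μ v`
the Lyapunov inequality gives `0 < -2 Re μ · v* X⁻¹ v` with `v* X⁻¹ v > 0`, so `Re μ < 0`.
-/

open Matrix
open scoped ComplexOrder

namespace Matrix

theorem map_ofReal_transpose {m n : Type*} (L : Matrix m n ℝ) :
    Lᵀ.map Complex.ofReal = (L.map Complex.ofReal)ᴴ :=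
  conjTranspose_map Complex.ofReal fun x => (Complex.conj_ofReal x).symm

theorem map_ofReal_mul {l m n : Type*} [Fintype m] (L : Matrix l m ℝ) (N : Matrix m n ℝ) :
    (L * N).map Complex.ofReal = L.map Complex.ofReal * N.map Complex.ofReal :=
  Matrix.map_mul (f := Complex.ofRealHom)

variable {n : Type*} [Fintype n] [DecidableEq n]

theorem det_map_ofReal (L : Matrix n n ℝ) : (L.map Complex.ofReal).det = L.det :=
  (RingHom.map_det Complex.ofRealHom L).symm

open scoped MatrixOrder in
theorem PosDef.map_ofReal {Q : Matrix n n ℝ} (hQ : Q.PosDef) : (Q.map Complex.ofReal).PosDef := by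
  obtain ⟨S, hS⟩ := CStarAlgebra.nonneg_iff_eq_star_mul_self.mp hQ.posSemidef.nonneg
  have hfactor : Q.map Complex.ofReal = (S.map Complex.ofReal)ᴴ * S.map Complex.ofReal := by
    rw [hS, star_eq_conjTranspose, conjTranspose_eq_transpose_of_trivial, map_ofReal_mul,
      map_ofReal_transpose]
  have hdet : (Q.map Complex.ofReal).det ≠ 0 := by
    rw [det_map_ofReal]
    exact Complex.ofReal_ne_zero.mpr hQ.det_pos.ne'
  rw [hfactor] at hdet ⊢
  exact (posSemidef_conjTranspose_mul_self _).posDef_iff_det_ne_zero.mpr hdet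

variable {𝕜 : Type*} [RCLike 𝕜]

theorem re_lt_zero_of_mem_spectrum_of_lyapunov {M P : Matrix n n 𝕜} (hP : P.PosDef)
    (hL : (-(Mᴴ * P + P * M)).PosDef) {μ : 𝕜} (hμ : μ ∈ spectrum 𝕜 M) : RCLike.re μ < 0 := by
  rw [← spectrum_toLin', ← Module.End.hasEigenvalue_iff_mem_spectrum] at hμ
  obtain ⟨v, hv⟩ := hμ.exists_hasEigenvector
  have hMv : M *ᵥ v = μ • v := by simpa using hv.apply_eq_smul
  have hform : star v ⬝ᵥ (-(Mᴴ * P + P * M)) *ᵥ v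
      = -((2 * RCLike.re μ : ℝ) : 𝕜) * (star v ⬝ᵥ P *ᵥ v) := by
    rw [neg_mulVec, add_mulVec, ← mulVec_mulVec, ← mulVec_mulVec, dotProduct_neg, dotProduct_add,
      dotProduct_mulVec (star v) Mᴴ, ← star_mulVec, hMv, mulVec_smul, star_smul, smul_dotProduct,
      dotProduct_smul, RCLike.ofReal_mul, RCLike.ofReal_ofNat, ← RCLike.add_conj]
    simp only [smul_eq_mul, RCLike.star_def]
    ring
  have hpos := hL.re_dotProduct_pos hv.2
  rw [hform, ← RCLike.ofReal_neg, RCLike.re_ofReal_mul] at hpos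
  nlinarith [hP.re_dotProduct_pos hv.2]

theorem re_lt_zero_of_mem_spectrum_map_ofReal_of_lyapunov {M P : Matrix n n ℝ} (hP : P.PosDef)
    (hL : (-(Mᵀ * P + P * M)).PosDef) : ∀ μ ∈ spectrum ℂ (M.map Complex.ofReal), μ.re < 0 := by
  refine fun μ => re_lt_zero_of_mem_spectrum_of_lyapunov hP.map_ofReal ?_
  simpa only [Matrix.map_neg _ Complex.ofReal_neg, Matrix.map_add _ Complex.ofReal_add,
    map_ofReal_mul, map_ofReal_transpose] using hL.map_ofReal

theorem PosDef.lyapunov_inv {M X : Matrix n n 𝕜} (hX : X.PosDef)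
    (hL : (-(M * X + (M * X)ᴴ)).PosDef) : (-(Mᴴ * X⁻¹ + X⁻¹ * M)).PosDef := by
  have hXd : IsUnit X.det := (isUnit_iff_isUnit_det X).mp hX.isUnit
  have hcongr : -(Mᴴ * X⁻¹ + X⁻¹ * M) = X⁻¹ᴴ * (-(M * X + (M * X)ᴴ)) * X⁻¹ := by
    rw [conjTranspose_nonsing_inv, hX.isHermitian.eq, conjTranspose_mul, hX.isHermitian.eq]
    simp only [mul_neg, neg_mul, mul_add, add_mul, ← mul_assoc, mul_nonsing_inv_cancel_right _ _ hXd,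
      nonsing_inv_mul _ hXd, one_mul, add_comm]
  rw [hcongr]
  exact hL.conjTranspose_mul_mul_same
    (mulVec_injective_of_isUnit (isUnit_nonsing_inv_iff.mpr hX.isUnit))

end Matrix

theorem stmt_19 {n m : ℕ} (A : Matrix (Fin n) (Fin n) ℝ) (B : Matrix (Fin n) (Fin m) ℝ)
    (Z : Matrix (Fin m) (Fin n) ℝ) (X : Matrix (Fin n) (Fin n) ℝ)
    (hX : X.PosDef)
    (hLMI : (-((A * X - B * Z) + (A * X - B * Z)ᵀ)).PosDef) :
    (∀ μ ∈ spectrum ℂ ((A - B * Z * X⁻¹).map Complex.ofReal), μ.re < 0) ∧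
      (-((A - B * Z * X⁻¹)ᵀ * X⁻¹ + X⁻¹ * (A - B * Z * X⁻¹))).PosDef := by
  have hMX : (A - B * Z * X⁻¹) * X = A * X - B * Z := by
    rw [sub_mul, nonsing_inv_mul_cancel_right _ _ ((isUnit_iff_isUnit_det X).mp hX.isUnit)]
  have hcert : (-((A - B * Z * X⁻¹)ᵀ * X⁻¹ + X⁻¹ * (A - B * Z * X⁻¹))).PosDef := by
    rw [← conjTranspose_eq_transpose_of_trivial]
    refine hX.lyapunov_inv ?_
    rwa [hMX, conjTranspose_eq_transpose_of_trivial]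
  exact ⟨re_lt_zero_of_mem_spectrum_map_ofReal_of_lyapunov hX.inv hcert, hcert⟩
end
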